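/- The rank generating function of the prime-free q-matroid Z_{ρ,ν} of rank ρ and nullity ν equals Σ_{i=0}^{ρ} Σ_{j=0}^{ν} [ρ choose i]_q · [ν choose j]_q · q^{(ρ−i)(ν−j)} x^i y^j; equivalently, in the lattice of subspaces of a (ρ+ν)-dimensional space over GF(q) with a fixed ν-dimensional subspace c, the number of subspaces x with dim(c ∨ x) = ρ + ν − i and dim(c ∧ x) = j is [ρ choose i]_q [ν choose j]_q q^{(ρ−i)(ν−j)}. -/
import Mathlib


/-- The Gaussian (q-)binomial coefficient (as a natural number, for a numeric `q`),
defined by the Pascal-type recursion `[n+1, k+1]_q = [n, k]_q + q^(k+1) * [n, k+1]_q`. -/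
def qBinom (q : ℕ) : ℕ → ℕ → ℕ
  | _, 0 => 1
  | 0, _ + 1 => 0
  | n + 1, k + 1 => qBinom q n k + q ^ (k + 1) * qBinom q n (k + 1)

lemma qBinom_zero_right (q n : ℕ) : qBinom q n 0 = 1 := by cases n <;> rfl

lemma qBinom_succ (q n k : ℕ) :
    qBinom q (n+1) (k+1) = qBinom q n k + q ^ (k + 1) * qBinom q n (k + 1) := rfl

lemma qBinom_eq_zero {q n k : ℕ} (h : n < k) : qBinom q n k = 0 := by
  induction n generalizing k with
  | zero => cases k with
    | zero => omega
    | succ k => rfl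
  | succ n ih =>
    cases k with
    | zero => omega
    | succ k => rw [qBinom_succ, ih (by omega), ih (by omega)]; ring

lemma qBinom_self (q n : ℕ) : qBinom q n n = 1 := by
  induction n with
  | zero => rfl
  | succ n ih => rw [qBinom_succ, ih, qBinom_eq_zero (by omega)]; ring

lemma qBinom_succ_succ' (q n k : ℕ) :
    qBinom q (n + 1) (k + 1) = qBinom q n (k + 1) + q ^ (n - k) * qBinom q n k := by
  induction n generalizing k with
  | zero =>
    cases k with
    | zero =>
      have h1 : qBinom q 0 1 = 0 := rfl
      have h2 : qBinom q 0 0 = 1 := rfl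
      rw [qBinom_succ, h1, h2]; ring
    | succ k =>
      rw [qBinom_eq_zero (by omega), qBinom_eq_zero (by omega), qBinom_eq_zero (by omega)]
      simp
  | succ n ih =>
    rcases lt_or_ge n k with h | h
    · rcases Nat.lt_or_ge (n+1) k with h2 | h2
      · rw [qBinom_eq_zero (by omega), qBinom_eq_zero (by omega), qBinom_eq_zero (by omega)]
        simp
      · have hk : k = n + 1 := by omega
        subst hk
        rw [qBinom_self, qBinom_eq_zero (by omega), qBinom_self, Nat.sub_self]
        ring
    · cases k with
      | zero =>
        have E := (qBinom_succ q n 0).symm.trans (ih 0)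
        simp only [qBinom_zero_right] at E
        rw [qBinom_succ q (n+1) 0, ih 0]
        simp only [qBinom_zero_right]
        have h7 : q ^ (n + 1 - 0) = q * q ^ (n - 0) := by
          rw [show n + 1 - 0 = (n - 0) + 1 by omega, pow_succ]; ring
        rw [h7]
        zify at E ⊢
        linear_combination E
      | succ k =>
        have E1 := (qBinom_succ q n k).symm.trans (ih k)
        have E2 := (qBinom_succ q n (k+1)).symm.trans (ih (k+1))
        rw [qBinom_succ q (n+1) (k+1), ih (k+1), qBinom_succ q n k]
        have h4 : n + 1 - (k + 1) = n - k := by omega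
        have h6 : q ^ (k+1+1) = q * q ^ (k+1) := by rw [pow_succ]; ring
        have h7 : q ^ (n - k) = q * q ^ (n - (k+1)) := by
          rw [show n - k = (n - (k+1)) + 1 by omega, pow_succ]; ring
        rw [h4, h6, h7]
        rw [h7] at E1
        rw [h6] at E2
        zify at E1 E2 ⊢
        linear_combination E1 + E2

lemma qBinom_symm {q n k : ℕ} (h : k ≤ n) : qBinom q n k = qBinom q n (n - k) := by
  induction n generalizing k with
  | zero => interval_cases k; rfl
  | succ n ih =>
    cases k with
    | zero => rw [qBinom_zero_right, Nat.sub_zero, qBinom_self]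
    | succ k =>
      rw [show n + 1 - (k+1) = n - k by omega]
      rcases Nat.lt_or_ge k n with h2 | h2
      · rw [qBinom_succ q n k, show n - k = (n-(k+1))+1 by omega,
          qBinom_succ_succ' q n (n-(k+1)), show (n-(k+1))+1 = n - k by omega,
          show n - (n-(k+1)) = k + 1 by omega, ← ih (show k ≤ n by omega),
          ← ih (show k + 1 ≤ n by omega)]
      · have hk : k = n := by omega
        subst hk
        rw [qBinom_self, Nat.sub_self, qBinom_zero_right]

section
open Module Submodule

variable {F : Type*} [Field F] [Fintype F]
variable {M : Type*} [AddCommGroup M] [Module F M] [FiniteDimensional F M]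

lemma card_module_eq (M : Type*) [AddCommGroup M] [Module F M] [FiniteDimensional F M] :
    Nat.card M = Fintype.card F ^ finrank F M := by
  haveI : Finite M := Module.finite_of_finite F
  haveI : Fintype M := Fintype.ofFinite M
  rw [Nat.card_eq_fintype_card, card_eq_pow_finrank (K := F)]

lemma card_linearMap (N : Type*) [AddCommGroup N] [Module F N] [FiniteDimensional F N] :
    Nat.card (M →ₗ[F] N) = Fintype.card F ^ (finrank F M * finrank F N) := by
  rw [card_module_eq (F := F) (M →ₗ[F] N), Module.finrank_linearMap]

/-- The projections onto `p` are in bijection with `M ⧸ p →ₗ p`. -/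
noncomputable def projEquiv (p : Submodule F M) (f₀ : M →ₗ[F] p) (hf₀ : ∀ x : p, f₀ x = x) :
    { f : M →ₗ[F] p // ∀ x : p, f x = x } ≃ ((M ⧸ p) →ₗ[F] p) where
  toFun f := p.liftQ (f.1 - f₀) (by
    intro x hx
    simp only [LinearMap.mem_ker, LinearMap.sub_apply, f.2 ⟨x, hx⟩, hf₀ ⟨x, hx⟩, sub_self])
  invFun g := ⟨g.comp p.mkQ + f₀, by
    intro x
    simp [hf₀ x, (Quotient.mk_eq_zero p).2 x.2]⟩
  left_inv f := by
    ext x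
    simp
  right_inv g := by
    apply Submodule.linearMap_qext
    ext x
    simp

lemma card_isCompl (p : Submodule F M) :
    Nat.card { x : Submodule F M // IsCompl p x } =
      Fintype.card F ^ (finrank F (M ⧸ p) * finrank F p) := by
  obtain ⟨p', hp'⟩ := p.exists_isCompl
  let f₀ := (p.isComplEquivProj ⟨p', hp'⟩)
  rw [Nat.card_congr ((p.isComplEquivProj).trans (projEquiv p f₀.1 f₀.2)), card_linearMap]
end

section
open Module Submodule
set_option linter.unusedSectionVars false

variable {F : Type*} [Field F] [Fintype F]
variable {V : Type*} [AddCommGroup V] [Module F V] [FiniteDimensional F V]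

lemma finite_submodule : Finite (Submodule F V) := by
  haveI : Finite V := Module.finite_of_finite F
  exact Finite.of_injective (fun p : Submodule F V => (p : Set V)) SetLike.coe_injective

lemma card_partition {α : Type*} [Finite α] (P Q : α → Prop) :
    Nat.card {a // P a} =
      Nat.card {a // P a ∧ Q a} + Nat.card {a // P a ∧ ¬ Q a} := by
  classical
  rw [← Nat.card_sum]
  apply Nat.card_congr
  exact ((Equiv.sumCompl (fun b : {a // P a} => Q b.1)).symm.trans
    (Equiv.sumCongr (Equiv.subtypeSubtypeEquivSubtypeInter P Q)
      (Equiv.subtypeSubtypeEquivSubtypeInter P (fun a => ¬ Q a))))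

lemma card_fiber_const {α β : Type*} [Finite α] [Finite β] (f : α → β) (m : ℕ)
    (h : ∀ b : β, Nat.card {a // f a = b} = m) : Nat.card α = Nat.card β * m := by
  classical
  haveI := Fintype.ofFinite α
  haveI := Fintype.ofFinite β
  rw [← Nat.card_congr (Equiv.sigmaFiberEquiv f), Nat.card_eq_fintype_card,
    Fintype.card_sigma]
  have : ∀ b : β, Fintype.card {a // f a = b} = m := by
    intro b; rw [← Nat.card_eq_fintype_card, h b]
  simp only [this, Finset.sum_const, smul_eq_mul, Finset.card_univ,
    Nat.card_eq_fintype_card]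

lemma finrank_comap_mkQ (p : Submodule F V) (W' : Submodule F (V ⧸ p)) :
    finrank F (comap p.mkQ W') = finrank F W' + finrank F p := by
  set g : (comap p.mkQ W') →ₗ[F] V ⧸ p := p.mkQ.comp (comap p.mkQ W').subtype with hg
  have hr : LinearMap.range g = W' := by
    rw [hg, LinearMap.range_comp, Submodule.range_subtype,
      Submodule.map_comap_eq_of_surjective (p.mkQ_surjective)]
  have hk : LinearMap.ker g = comap (comap p.mkQ W').subtype p := by
    rw [hg, LinearMap.ker_comp, Submodule.ker_mkQ]
  have hle : p ≤ comap p.mkQ W' := by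
    intro x hx
    simp [Submodule.mem_comap, (Submodule.Quotient.mk_eq_zero p).2 hx]
  have := LinearMap.finrank_range_add_finrank_ker g
  rw [hr, hk] at this
  rw [← this, (Submodule.comapSubtypeEquivOfLe hle).finrank_eq]

lemma finrank_map_mkQ_add (p W : Submodule F V) :
    finrank F (map p.mkQ W) + finrank F (W ⊓ p : Submodule F V) = finrank F W := by
  set g : W →ₗ[F] V ⧸ p := p.mkQ.comp W.subtype with hg
  have hr : LinearMap.range g = map p.mkQ W := by
    rw [hg, LinearMap.range_comp, Submodule.range_subtype]
  have hk : LinearMap.ker g = comap W.subtype p := by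
    rw [hg, LinearMap.ker_comp, Submodule.ker_mkQ]
  have h2 : finrank F (comap W.subtype p) = finrank F (W ⊓ p : Submodule F V) := by
    rw [← Submodule.map_comap_subtype, Submodule.finrank_map_subtype_eq]
  have := LinearMap.finrank_range_add_finrank_ker g
  rw [hr, hk, h2] at this
  exact this

/-- Counting relative complements: subspaces `W` with `W ⊓ p = ⊥` and `W ⊔ p = P`. -/
lemma card_relative_compl (p P : Submodule F V) (hp : p ≤ P) :
    Nat.card {W : Submodule F V // W ⊓ p = ⊥ ∧ W ⊔ p = P} =
      Fintype.card F ^ ((finrank F P - finrank F p) * finrank F p) := by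
  set pP : Submodule F P := comap P.subtype p with hpP
  have hinj : Function.Injective P.subtype := Subtype.coe_injective
  have e : {W : Submodule F V // W ⊓ p = ⊥ ∧ W ⊔ p = P} ≃
      {x : Submodule F P // IsCompl pP x} := by
    refine ⟨fun W => ⟨comap P.subtype W.1, ?_⟩, fun x => ⟨map P.subtype x.1, ?_, ?_⟩, ?_, ?_⟩
    · obtain ⟨W, hW1, hW2⟩ := W
      have hWP : W ≤ P := le_trans le_sup_left hW2.le
      constructor
      · rw [disjoint_iff, hpP, ← Submodule.comap_inf, inf_comm, hW1]
        simp [Submodule.comap_bot, Submodule.ker_subtype]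
      · rw [codisjoint_iff]
        apply Submodule.map_injective_of_injective hinj
        rw [Submodule.map_sup, Submodule.map_comap_subtype, Submodule.map_comap_subtype,
          Submodule.map_top, Submodule.range_subtype, inf_eq_right.2 hp, inf_eq_right.2 hWP,
          sup_comm, hW2]
    · obtain ⟨x, hx⟩ := x
      have hmapp : map P.subtype pP = p := by
        rw [hpP, Submodule.map_comap_subtype, inf_eq_right.2 hp]
      rw [← hmapp, ← Submodule.map_inf _ hinj, disjoint_iff.1 hx.disjoint.symm,
        Submodule.map_bot]
    · obtain ⟨x, hx⟩ := x
      have hmapp : map P.subtype pP = p := by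
        rw [hpP, Submodule.map_comap_subtype, inf_eq_right.2 hp]
      rw [← hmapp, ← Submodule.map_sup, codisjoint_iff.1 hx.codisjoint.symm,
        Submodule.map_top, Submodule.range_subtype]
    · rintro ⟨W, hW1, hW2⟩
      have hWP : W ≤ P := le_trans le_sup_left hW2.le
      simp only [Subtype.mk.injEq]
      rw [Submodule.map_comap_subtype, inf_eq_right.2 hWP]
    · rintro ⟨x, hx⟩
      simp only [Subtype.mk.injEq]
      rw [Submodule.comap_map_eq, Submodule.ker_subtype, sup_bot_eq]
  rw [Nat.card_congr e, card_isCompl pP]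
  have h1 : finrank F pP = finrank F p := (Submodule.comapSubtypeEquivOfLe hp).finrank_eq
  have h2 : finrank F (P ⧸ pP) + finrank F pP = finrank F P :=
    Submodule.finrank_quotient_add_finrank pP
  have h3 : finrank F p ≤ finrank F P := Submodule.finrank_mono hp
  have h4 : finrank F (P ⧸ pP) = finrank F P - finrank F p := by omega
  rw [h1, h4]
end

section
open Module Submodule
set_option linter.unusedSectionVars false
set_option maxHeartbeats 1000000

universe u

variable {F : Type*} [Field F] [Fintype F]

lemma card_subspaces_zero (V : Type*) [AddCommGroup V] [Module F V] [FiniteDimensional F V] :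
    Nat.card {W : Submodule F V // finrank F W = 0} = 1 := by
  rw [Nat.card_eq_one_iff_unique]
  refine ⟨⟨?_⟩, ⟨⟨⊥, by simp⟩⟩⟩
  rintro ⟨W1, h1⟩ ⟨W2, h2⟩
  apply Subtype.ext
  show W1 = W2
  rw [Submodule.finrank_eq_zero.1 h1, Submodule.finrank_eq_zero.1 h2]

lemma card_subspaces (n : ℕ) : ∀ (k : ℕ) (V : Type u) [AddCommGroup V] [Module F V]
    [FiniteDimensional F V], finrank F V = n →
    Nat.card {W : Submodule F V // finrank F W = k} = qBinom (Fintype.card F) n k := by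
  induction n with
  | zero =>
    intro k V _ _ _ hV
    cases k with
    | zero => rw [card_subspaces_zero, qBinom_zero_right]
    | succ k =>
      rw [qBinom_eq_zero (by omega)]
      haveI : IsEmpty {W : Submodule F V // finrank F W = k + 1} := by
        constructor
        rintro ⟨W, hW⟩
        have := Submodule.finrank_le W
        omega
      exact Nat.card_of_isEmpty
  | succ n ih =>
    intro k V _ _ _ hV
    haveI : Finite (Submodule F V) := finite_submodule
    cases k with
    | zero => rw [card_subspaces_zero, qBinom_zero_right]
    | succ k =>
      obtain ⟨v, hv⟩ : ∃ v : V, v ≠ 0 := by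
        haveI : Nontrivial V := nontrivial_of_finrank_pos (R := F) (by omega)
        exact exists_ne 0
      set L : Submodule F V := span F {v} with hLdef
      have hL1 : finrank F L = 1 := finrank_span_singleton hv
      have hLbot : L ≠ ⊥ := by
        intro h
        rw [h, finrank_bot] at hL1
        omega
      have hQdim : finrank F (V ⧸ L) = n := by
        have := Submodule.finrank_quotient_add_finrank L
        omega
      have hle : ∀ W' : Submodule F (V ⧸ L), L ≤ comap L.mkQ W' := by
        intro W' x hx
        have h0 : L.mkQ x = 0 := (Submodule.Quotient.mk_eq_zero L).2 hx
        simp [Submodule.mem_comap, h0]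
      rw [card_partition (fun W : Submodule F V => finrank F W = k + 1) (fun W => L ≤ W)]
      have ha : Nat.card {W : Submodule F V // finrank F W = k + 1 ∧ L ≤ W} =
          qBinom (Fintype.card F) n k := by
        rw [← ih k (V ⧸ L) hQdim]
        apply Nat.card_congr
        refine ⟨fun W => ⟨map L.mkQ W.1, ?_⟩, fun W' => ⟨comap L.mkQ W'.1, ?_, hle W'.1⟩,
          ?_, ?_⟩
        · obtain ⟨W, hWr, hWL⟩ := W
          show finrank F (map L.mkQ W) = k
          have h1 := finrank_comap_mkQ L (map L.mkQ W)
          rw [Submodule.comap_map_mkQ, sup_eq_right.2 hWL] at h1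
          omega
        · rw [finrank_comap_mkQ, W'.2, hL1]
        · rintro ⟨W, hWr, hWL⟩
          apply Subtype.ext
          simp only
          rw [Submodule.comap_map_mkQ, sup_eq_right.2 hWL]
        · rintro ⟨W', hW'⟩
          apply Subtype.ext
          simp only
          exact Submodule.map_comap_eq_of_surjective (L.mkQ_surjective) W'
      have hdisj : ∀ W : Submodule F V, ¬ L ≤ W → W ⊓ L = ⊥ := by
        intro W hW
        have hne : W ⊓ L ≠ L := fun h => hW (h ▸ inf_le_left)
        have hlt : W ⊓ L < L := lt_of_le_of_ne inf_le_right hne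
        have h2 := Submodule.finrank_lt_finrank_of_lt hlt
        rw [hL1] at h2
        exact Submodule.finrank_eq_zero.1 (by omega)
      have hb : Nat.card {W : Submodule F V // finrank F W = k + 1 ∧ ¬ L ≤ W} =
          qBinom (Fintype.card F) n (k + 1) * Fintype.card F ^ (k + 1) := by
        haveI : Finite (Submodule F (V ⧸ L)) := finite_submodule
        have hmapdim : ∀ W : {W : Submodule F V // finrank F W = k + 1 ∧ ¬ L ≤ W},
            finrank F (map L.mkQ W.1) = k + 1 := by
          rintro ⟨W, hWr, hWL⟩
          have h1 := finrank_map_mkQ_add L W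
          rw [hdisj W hWL, finrank_bot] at h1
          simpa using h1.trans hWr
        set g : {W : Submodule F V // finrank F W = k + 1 ∧ ¬ L ≤ W} →
            {W' : Submodule F (V ⧸ L) // finrank F W' = k + 1} :=
          fun W => ⟨map L.mkQ W.1, hmapdim W⟩ with hg
        rw [card_fiber_const g (Fintype.card F ^ (k + 1)) ?_, ih (k + 1) (V ⧸ L) hQdim]
        intro W'
        set P : Submodule F V := comap L.mkQ W'.1 with hP
        have hPdim : finrank F P = k + 1 + 1 := by
          rw [hP, finrank_comap_mkQ, W'.2, hL1]
        have e : {a : {W : Submodule F V // finrank F W = k + 1 ∧ ¬ L ≤ W} // g a = W'} ≃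
            {W : Submodule F V // W ⊓ L = ⊥ ∧ W ⊔ L = P} := by
          refine ⟨fun a => ⟨a.1.1, hdisj a.1.1 a.1.2.2, ?_⟩, fun W => ⟨⟨W.1, ?_, ?_⟩, ?_⟩,
            fun a => rfl, fun W => rfl⟩
          · have hg1 : map L.mkQ a.1.1 = W'.1 := congrArg Subtype.val a.2
            rw [sup_comm, ← Submodule.comap_map_mkQ, hg1]
          · -- finrank W.1 = k + 1
            obtain ⟨W, h1, h2⟩ := W
            show finrank F W = k + 1
            have h3 := finrank_map_mkQ_add L W
            rw [h1, finrank_bot] at h3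
            have h4 : map L.mkQ W = W'.1 := by
              have := congrArg (map L.mkQ) h2
              rwa [Submodule.map_sup, mkQ_map_self, sup_bot_eq, hP,
                Submodule.map_comap_eq_of_surjective (L.mkQ_surjective)] at this
            rw [h4, W'.2] at h3
            omega
          · -- ¬ L ≤ W.1
            obtain ⟨W, h1, h2⟩ := W
            intro hLW
            exact hLbot (le_bot_iff.1 (h1 ▸ le_inf hLW le_rfl))
          · -- g ⟨...⟩ = W'
            obtain ⟨W, h1, h2⟩ := W
            apply Subtype.ext
            simp only [hg]
            have := congrArg (map L.mkQ) h2
            rwa [Submodule.map_sup, mkQ_map_self, sup_bot_eq, hP,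
              Submodule.map_comap_eq_of_surjective (L.mkQ_surjective)] at this
        rw [Nat.card_congr e, card_relative_compl L P (hle W'.1), hPdim, hL1]
        norm_num
      rw [ha, hb, qBinom_succ]
      ring
end

open Module Submodule

set_option maxHeartbeats 1000000

lemma map_mkQ_inf {F V : Type*} [Field F] [AddCommGroup V] [Module F V]
    (p x y : Submodule F V) (hx : p ≤ x) (hy : p ≤ y) :
    map p.mkQ (x ⊓ y) = map p.mkQ x ⊓ map p.mkQ y := by
  apply Submodule.comap_injective_of_surjective p.mkQ_surjective
  rw [Submodule.comap_inf, Submodule.comap_map_mkQ, Submodule.comap_map_mkQ,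
    Submodule.comap_map_mkQ, sup_eq_right.2 (le_inf hx hy), sup_eq_right.2 hx,
    sup_eq_right.2 hy]

/-- In the lattice of subspaces of a `(ρ+ν)`-dimensional vector space over `GF(q)` with a
fixed `ν`-dimensional subspace `c`, the number of subspaces `x` with
`dim(c ⊔ x) = ρ + ν − i` (rank lack `i`) and `dim(c ⊓ x) = j` (nullity `j`) equals
`[ρ choose i]_q [ν choose j]_q q^{(ρ−i)(ν−j)}`; these are the coefficients of the rank
generating function of the prime-free q-matroid `Z_{ρ,ν}`. -/
theorem primeFree_rgf_coefficients (q ρ ν i j : ℕ) (hi : i ≤ ρ) (hj : j ≤ ν)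
    (F : Type*) [Field F] [Fintype F] (hq : Fintype.card F = q)
    (V : Type*) [AddCommGroup V] [Module F V] [FiniteDimensional F V]
    (hV : Module.finrank F V = ρ + ν)
    (c : Submodule F V) (hc : Module.finrank F c = ν) :
    Nat.card {x : Submodule F V //
        Module.finrank F (c ⊔ x : Submodule F V) = ρ + ν - i ∧
        Module.finrank F (c ⊓ x : Submodule F V) = j} =
      qBinom q ρ i * qBinom q ν j * q ^ ((ρ - i) * (ν - j)) := by
  subst hq
  haveI : Finite (Submodule F V) := finite_submodule
  haveI : Finite (Submodule F c) := finite_submodule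
  haveI : Finite (Submodule F (V ⧸ c)) := finite_submodule
  have hquot : finrank F (V ⧸ c) = ρ := by
    have := Submodule.finrank_quotient_add_finrank c
    omega
  -- the fibration over (c ⊓ x, image of x in V ⧸ c)
  have hxdim : ∀ x : Submodule F V, finrank F (c ⊔ x : Submodule F V) = ρ + ν - i →
      finrank F (c ⊓ x : Submodule F V) = j → finrank F x = ρ - i + j := by
    intro x h1 h2
    have h3 := Submodule.finrank_sup_add_finrank_inf_eq c x
    rw [h1, h2, hc] at h3
    omega
  have hmapdim : ∀ x : Submodule F V, finrank F (c ⊔ x : Submodule F V) = ρ + ν - i →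
      finrank F (c ⊓ x : Submodule F V) = j → finrank F (map c.mkQ x) = ρ - i := by
    intro x h1 h2
    have h3 := finrank_map_mkQ_add c x
    rw [inf_comm] at h3
    rw [h2, hxdim x h1 h2] at h3
    omega
  set f : {x : Submodule F V //
        finrank F (c ⊔ x : Submodule F V) = ρ + ν - i ∧
        finrank F (c ⊓ x : Submodule F V) = j} →
      {W : Submodule F c // finrank F W = j} × {U : Submodule F (V ⧸ c) // finrank F U = ρ - i} :=
    fun x => (⟨comap c.subtype (c ⊓ x.1),
        by rw [(Submodule.comapSubtypeEquivOfLe (inf_le_left :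
            c ⊓ x.1 ≤ c)).finrank_eq]; exact x.2.2⟩,
      ⟨map c.mkQ x.1, hmapdim x.1 x.2.1 x.2.2⟩) with hf
  rw [card_fiber_const f (Fintype.card F ^ ((ρ - i) * (ν - j))) ?_, Nat.card_prod,
    card_subspaces ν j c hc, card_subspaces ρ (ρ - i) (V ⧸ c) hquot, ← qBinom_symm hi]
  · ring
  · -- each fiber has cardinality q ^ ((ρ-i)(ν-j))
    rintro ⟨W, U⟩
    set Wt : Submodule F V := map c.subtype W.1 with hWt
    have hWtc : Wt ≤ c := by
      rw [hWt, Submodule.map_le_iff_le_comap]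
      intro w _
      simp [Submodule.mem_comap]
    have hWtdim : finrank F Wt = j := by
      rw [hWt, Submodule.finrank_map_subtype_eq]
      exact W.2
    set P : Submodule F V := comap c.mkQ U.1 with hP
    have hcP : c ≤ P := by
      intro z hz
      have h0 : c.mkQ z = 0 := (Submodule.Quotient.mk_eq_zero c).2 hz
      simp [hP, Submodule.mem_comap, h0]
    have hWtP : Wt ≤ P := le_trans hWtc hcP
    have hPdim : finrank F P = ρ - i + ν := by
      rw [hP, finrank_comap_mkQ, U.2, hc]
    set σ := Wt.mkQ with hσ
    set cb : Submodule F (V ⧸ Wt) := map σ c with hcb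
    set Pb : Submodule F (V ⧸ Wt) := map σ P with hPb
    have hcbP : cb ≤ Pb := Submodule.map_mono hcP
    have hcbdim : finrank F cb = ν - j := by
      have h1 := finrank_map_mkQ_add Wt c
      rw [inf_of_le_right hWtc] at h1
      rw [hc, hWtdim] at h1
      rw [hcb, hσ]
      omega
    have hPbdim : finrank F Pb = ρ - i + (ν - j) := by
      have h1 := finrank_map_mkQ_add Wt P
      rw [inf_of_le_right hWtP] at h1
      rw [hPdim, hWtdim] at h1
      rw [hPb, hσ]
      omega
    have e : {a : {x : Submodule F V //
          finrank F (c ⊔ x : Submodule F V) = ρ + ν - i ∧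
          finrank F (c ⊓ x : Submodule F V) = j} // f a = (W, U)} ≃
        {y : Submodule F (V ⧸ Wt) // y ⊓ cb = ⊥ ∧ y ⊔ cb = Pb} := by
      refine ⟨fun a => ⟨map σ a.1.1, ?_, ?_⟩, fun y => ⟨⟨comap σ y.1, ?_, ?_⟩, ?_⟩, ?_, ?_⟩
      · -- disjointness
        obtain ⟨⟨x, hx1, hx2⟩, hfa⟩ := a
        have hWx : comap c.subtype (c ⊓ x) = W.1 := congrArg (fun p => p.1.1) hfa
        have hcx : c ⊓ x = Wt := by
          rw [hWt, ← hWx, Submodule.map_comap_subtype, inf_of_le_right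
            (inf_le_left : c ⊓ x ≤ c)]
        have hWtx : Wt ≤ x := hcx ▸ inf_le_right
        rw [hcb, ← map_mkQ_inf Wt x c hWtx hWtc, inf_comm, hcx, Submodule.mkQ_map_self]
      · -- sup
        obtain ⟨⟨x, hx1, hx2⟩, hfa⟩ := a
        have hUx : map c.mkQ x = U.1 := congrArg (fun p => p.2.1) hfa
        have hcsup : c ⊔ x = P := by
          rw [hP, ← hUx, Submodule.comap_map_mkQ]
        rw [hcb, hPb, ← Submodule.map_sup, sup_comm x c, hcsup]
      · -- finrank (c ⊔ comap σ y) = ρ + ν - i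
        obtain ⟨y, hy1, hy2⟩ := y
        show finrank F (c ⊔ comap σ y : Submodule F V) = ρ + ν - i
        have hsup : c ⊔ comap σ y = P := by
          have h1 : comap σ (map σ (c ⊔ comap σ y)) = c ⊔ comap σ y := by
            rw [Submodule.comap_map_mkQ, sup_eq_right.2 (le_trans hWtc le_sup_left)]
          have h2 : comap σ (map σ P) = P := by
            rw [Submodule.comap_map_mkQ, sup_eq_right.2 hWtP]
          rw [← h1, Submodule.map_sup, Submodule.map_comap_eq_of_surjective
            Wt.mkQ_surjective y, ← hcb, sup_comm cb y, hy2, hPb, h2]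
        rw [hsup, hPdim]
        omega
      · -- finrank (c ⊓ comap σ y) = j
        obtain ⟨y, hy1, hy2⟩ := y
        show finrank F (c ⊓ comap σ y : Submodule F V) = j
        have hinf : c ⊓ comap σ y = Wt := by
          have hcc : comap σ cb = c := by
            rw [hcb, Submodule.comap_map_mkQ, sup_eq_right.2 hWtc]
          rw [← hcc, ← Submodule.comap_inf, inf_comm cb y, hy1, Submodule.comap_bot,
            Submodule.ker_mkQ]
        rw [hinf, hWtdim]
      · -- f value
        obtain ⟨y, hy1, hy2⟩ := y
        have hinf : c ⊓ comap σ y = Wt := by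
          have hcc : comap σ cb = c := by
            rw [hcb, Submodule.comap_map_mkQ, sup_eq_right.2 hWtc]
          rw [← hcc, ← Submodule.comap_inf, inf_comm cb y, hy1, Submodule.comap_bot,
            Submodule.ker_mkQ]
        have hsup : c ⊔ comap σ y = P := by
          have h1 : comap σ (map σ (c ⊔ comap σ y)) = c ⊔ comap σ y := by
            rw [Submodule.comap_map_mkQ, sup_eq_right.2 (le_trans hWtc le_sup_left)]
          have h2 : comap σ (map σ P) = P := by
            rw [Submodule.comap_map_mkQ, sup_eq_right.2 hWtP]
          rw [← h1, Submodule.map_sup, Submodule.map_comap_eq_of_surjective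
            Wt.mkQ_surjective y, ← hcb, sup_comm cb y, hy2, hPb, h2]
        have hWcomp : comap c.subtype (c ⊓ comap σ y) = W.1 := by
          rw [hinf, hWt, Submodule.comap_map_eq, Submodule.ker_subtype, sup_bot_eq]
        have hUcomp : map c.mkQ (comap σ y) = U.1 := by
          have h3 : map c.mkQ (c ⊔ comap σ y) = map c.mkQ (comap σ y) := by
            rw [Submodule.map_sup, Submodule.mkQ_map_self, bot_sup_eq]
          rw [← h3, hsup, hP, Submodule.map_comap_eq_of_surjective c.mkQ_surjective]
        rw [hf]
        exact Prod.ext (Subtype.ext hWcomp) (Subtype.ext hUcomp)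
      · -- left inverse
        rintro ⟨⟨x, hx1, hx2⟩, hfa⟩
        have hWx : comap c.subtype (c ⊓ x) = W.1 := congrArg (fun p => p.1.1) hfa
        have hcx : c ⊓ x = Wt := by
          rw [hWt, ← hWx, Submodule.map_comap_subtype, inf_of_le_right
            (inf_le_left : c ⊓ x ≤ c)]
        have hWtx : Wt ≤ x := hcx ▸ inf_le_right
        apply Subtype.ext
        apply Subtype.ext
        show comap σ (map σ x) = x
        rw [Submodule.comap_map_mkQ, sup_eq_right.2 hWtx]
      · -- right inverse
        rintro ⟨y, hy1, hy2⟩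
        apply Subtype.ext
        show map σ (comap σ y) = y
        exact Submodule.map_comap_eq_of_surjective Wt.mkQ_surjective y
    rw [Nat.card_congr e, card_relative_compl cb Pb hcbP, hcbdim, hPbdim]
    congr 2
    omega
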